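/- Rigidity of the normal form (step in the proof of Theorem 3.1): Let R be a commutative ring, let u, u' ∈ R[[t]] be even power series with zero constant coefficient, and suppose T_{(G,F)}(0,u) = (0,u') for some pair (G,F) with G odd and F ∈ H odd. Then 2tG = 0; if moreover 2 is invertible in R then G = 0 and u' = u∘F. Consequently (when 2 is invertible) two Moore algebras in the normal form (0,u), (0,u') are ∼-equivalent if and only if u' = u∘F for some odd F ∈ H. -/

import Mathlib

open PowerSeries

variable {R : Type*} [CommRing R]

/-- Substitution of the power series `G` (with zero constant coefficient) into `F`. -/
noncomputable def PowerSeries.comp (F G : R⟦X⟧) : R⟦X⟧ :=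
  PowerSeries.mk fun n => ∑ k ∈ Finset.range (n + 1), coeff k F * coeff n (G ^ k)

/-- A power series is even if all its odd-degree coefficients vanish. -/
def PowerSeries.IsEven (F : R⟦X⟧) : Prop := ∀ n : ℕ, Odd n → coeff n F = 0

/-- A power series is odd if all its even-degree coefficients vanish. -/
def PowerSeries.IsOdd (F : R⟦X⟧) : Prop := ∀ n : ℕ, Even n → coeff n F = 0

/-- Membership in the group `H`: zero constant coefficient and unit coefficient of `t`. -/
def PowerSeries.InH (F : R⟦X⟧) : Prop :=
  constantCoeff F = 0 ∧ IsUnit (coeff 1 F)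

/-- For `v = ∑_{i≥1} v_i t^{2i}`, this is `v⟨F⟩ := ∑_{i≥1} v_i F^{2i-1}`. -/
noncomputable def PowerSeries.substOddPow (v F : R⟦X⟧) : R⟦X⟧ :=
  PowerSeries.mk fun n =>
    ∑ i ∈ Finset.range (n + 1), coeff (2 * (i + 1)) v * coeff n (F ^ (2 * (i + 1) - 1))

/-- The action `T_{(G,F)}` of a unital `A_∞`-isomorphism on the pair `(v,w)` of
characteristic power series of an odd Moore algebra. -/
noncomputable def MooreAct (G F : R⟦X⟧) (p : R⟦X⟧ × R⟦X⟧) : R⟦X⟧ × R⟦X⟧ :=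
  (2 * PowerSeries.X * G + PowerSeries.X * PowerSeries.substOddPow p.1 F,
    -(G * PowerSeries.substOddPow p.1 F) + PowerSeries.comp p.2 F - G ^ 2)

/-! Since `0⟨F⟩ = 0`, the first component of `T_{(G,F)}(0,u)` is `2tG`; as `t` is a
non-zero-divisor in `R[[t]]`, invertibility of `2` forces `G = 0`, and the second component
then reads `u' = u∘F`. -/

namespace PowerSeries

@[simp]
lemma substOddPow_zero_left (F : R⟦X⟧) : substOddPow 0 F = 0 := by
  ext n
  simp [substOddPow]

lemma isOdd_zero : (0 : R⟦X⟧).IsOdd := fun n _ => map_zero (coeff n)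

lemma eq_zero_of_two_mul_X_mul_eq_zero (h2 : IsUnit (2 : R)) {G : R⟦X⟧}
    (h : 2 * X * G = 0) : G = 0 := by
  have h2' : IsUnit (2 : R⟦X⟧) := map_ofNat (C (R := R)) 2 ▸ h2.map C
  rw [mul_assoc, h2'.mul_right_eq_zero] at h
  exact X_mul_cancel (h.trans (mul_zero X).symm)

end PowerSeries

lemma mooreAct_zero_left (G F w : R⟦X⟧) :
    MooreAct G F (0, w) = (2 * X * G, w.comp F - G ^ 2) := by
  simp [MooreAct]

lemma mooreAct_zero_zero (F w : R⟦X⟧) : MooreAct 0 F (0, w) = (0, w.comp F) := by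
  simp [mooreAct_zero_left]

lemma eq_zero_and_eq_comp_of_mooreAct_zero (h2 : IsUnit (2 : R)) {G F u u' : R⟦X⟧}
    (hT : MooreAct G F (0, u) = (0, u')) : G = 0 ∧ u' = u.comp F := by
  rw [mooreAct_zero_left, Prod.mk.injEq] at hT
  obtain ⟨hXG, hcomp⟩ := hT
  have hG : G = 0 := eq_zero_of_two_mul_X_mul_eq_zero h2 hXG
  subst hG
  simpa using hcomp.symm

theorem odd_moore_normal_form_rigidity_general (R : Type*) [CommRing R] (G F u u' : R⟦X⟧)
    (hT : MooreAct G F (0, u) = (0, u')) :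
    2 * PowerSeries.X * G = 0 ∧
    (IsUnit (2 : R) → G = 0 ∧ u' = u.comp F) ∧
    (IsUnit (2 : R) → ∀ u₁ u₂ : R⟦X⟧,
      u₁.IsEven → constantCoeff u₁ = 0 → u₂.IsEven → constantCoeff u₂ = 0 →
      ((∃ G' F' : R⟦X⟧, G'.IsOdd ∧ F'.IsOdd ∧ F'.InH ∧ MooreAct G' F' (0, u₁) = (0, u₂)) ↔
        ∃ F' : R⟦X⟧, F'.IsOdd ∧ F'.InH ∧ u₂ = u₁.comp F')) := by
  refine ⟨congrArg Prod.fst ((mooreAct_zero_left G F u).symm.trans hT),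
    fun h2 => eq_zero_and_eq_comp_of_mooreAct_zero h2 hT,
    fun h2 u₁ u₂ _ _ _ _ => ⟨?_, ?_⟩⟩
  · rintro ⟨G', F', -, hF', hFH', hT'⟩
    exact ⟨F', hF', hFH', (eq_zero_and_eq_comp_of_mooreAct_zero h2 hT').2⟩
  · rintro ⟨F', hF', hFH', rfl⟩
    exact ⟨0, F', isOdd_zero, hF', hFH', mooreAct_zero_zero F' u₁⟩

/-- **Rigidity of the normal form** (step in the proof of Theorem 3.1).  If
`T_{(G,F)}(0,u) = (0,u')` with `G` odd and `F ∈ H` odd, then `2tG = 0`; if moreover `2` is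
invertible then `G = 0` and `u' = u∘F`.  Consequently (when `2` is invertible) two Moore
algebras in normal form `(0,u)`, `(0,u')` are `∼`-equivalent iff `u' = u∘F` for some odd
`F ∈ H`. -/
theorem odd_moore_normal_form_rigidity (R : Type*) [CommRing R] (G F u u' : R⟦X⟧)
    (hu : u.IsEven) (hu0 : constantCoeff u = 0)
    (hu' : u'.IsEven) (hu'0 : constantCoeff u' = 0)
    (hG : G.IsOdd) (hF : F.IsOdd) (hFH : F.InH)
    (hT : MooreAct G F (0, u) = (0, u')) :
    2 * PowerSeries.X * G = 0 ∧
    (IsUnit (2 : R) → G = 0 ∧ u' = u.comp F) ∧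
    (IsUnit (2 : R) → ∀ u₁ u₂ : R⟦X⟧,
      u₁.IsEven → constantCoeff u₁ = 0 → u₂.IsEven → constantCoeff u₂ = 0 →
      ((∃ G' F' : R⟦X⟧, G'.IsOdd ∧ F'.IsOdd ∧ F'.InH ∧ MooreAct G' F' (0, u₁) = (0, u₂)) ↔
        ∃ F' : R⟦X⟧, F'.IsOdd ∧ F'.InH ∧ u₂ = u₁.comp F')) :=
  odd_moore_normal_form_rigidity_general R G F u u' hT
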